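/- Let p₁, p₂ be probability mass functions on {1,…,n} with p₂(i)/p₁(i) ≤ w whenever p₁(i) > 0, and let p̂₁, p̂₂ be estimates satisfying |p̂₁(i) − p₁(i)| ≤ p₁(i)·ε/16 and |p̂₂(i) − p₂(i)| ≤ p₂(i)·ε/16 for all i in a set H. Then ∑_{i∈H} |p₂(i) − p̂₂(i)·(p₁(i)/p̂₁(i))| ≤ (ε/4)·∑_{i∈H} p₂(i) ≤ ε/4. -/

import Mathlib

open Finset

/-
Writing the relative errors as p̂₁ = p₁(1 + s) and p̂₂ = p₂(1 + t) with |s|, |t| ≤ δ = ε/16,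
the reweighted mass is p₂(1 + t)/(1 + s), which differs from p₂ by p₂|s - t|/(1 + s) ≤ p₂ · 2δ/(1 - δ)
≤ 4δ p₂ = (ε/4) p₂. Summing over H and using ∑_H p₂ ≤ 1 gives the claim.
-/

lemma pos_of_abs_sub_le_mul {x x' δ : ℝ} (hx : 0 < x) (hδ : δ < 1) (h : |x' - x| ≤ x * δ) :
    0 < x' := by
  have := (abs_le.mp h).1
  nlinarith

lemma abs_sub_mul_div_le_of_abs_sub_le_mul {p p' q q' δ : ℝ} (hp : 0 ≤ p) (hq : 0 < q) (hδ : δ ≤ 1 / 2)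
    (hp' : |p' - p| ≤ p * δ) (hq' : |q' - q| ≤ q * δ) :
    |p - p' * (q / q')| ≤ 4 * δ * p := by
  have hq'_pos : 0 < q' := pos_of_abs_sub_le_mul hq (by linarith) hq'
  have hq'_lower : q / 2 ≤ q' := by
    have := (abs_le.mp hq').1
    nlinarith
  have hnum : |p * (q' - q) - q * (p' - p)| ≤ 2 * δ * p * q := by
    calc |p * (q' - q) - q * (p' - p)| ≤ |p * (q' - q)| + |q * (p' - p)| := abs_sub _ _
      _ = p * |q' - q| + q * |p' - p| := by rw [abs_mul, abs_mul, abs_of_nonneg hp, abs_of_pos hq]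
      _ ≤ p * (q * δ) + q * (p * δ) := by gcongr
      _ = 2 * δ * p * q := by ring
  have hsplit : p - p' * (q / q') = (p * (q' - q) - q * (p' - p)) / q' := by
    field_simp
    ring
  calc |p - p' * (q / q')| = |p * (q' - q) - q * (p' - p)| / q' := by
        rw [hsplit, abs_div, abs_of_pos hq'_pos]
    _ ≤ 2 * δ * p * q / (q / 2) := by
        gcongr
        exact (abs_nonneg _).trans hnum
    _ = 4 * δ * p := by field_simp; ring

theorem heavy_points_l1_bound_general
    (n : ℕ) (ε : ℝ) (hε : 0 < ε) (hε1 : ε < 1)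
    (p₁ p₂ phat₁ phat₂ : Fin n → ℝ)
    (hp₂0 : ∀ i, 0 ≤ p₂ i)
    (hp₂1 : ∑ i, p₂ i = 1)
    (H : Finset (Fin n))
    (hpos : ∀ i ∈ H, 0 < p₁ i)
    (hest₁ : ∀ i ∈ H, |phat₁ i - p₁ i| ≤ p₁ i * ε / 16)
    (hest₂ : ∀ i ∈ H, |phat₂ i - p₂ i| ≤ p₂ i * ε / 16) :
    ∑ i ∈ H, |p₂ i - phat₂ i * (p₁ i / phat₁ i)| ≤ ε / 4 * ∑ i ∈ H, p₂ i
      ∧ ε / 4 * ∑ i ∈ H, p₂ i ≤ ε / 4 := by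
  refine ⟨?_, ?_⟩
  · rw [mul_sum]
    refine sum_le_sum fun i hi => ?_
    have h := abs_sub_mul_div_le_of_abs_sub_le_mul (δ := ε / 16) (hp₂0 i) (hpos i hi) (by linarith)
      (by simpa [mul_div_assoc] using hest₂ i hi) (by simpa [mul_div_assoc] using hest₁ i hi)
    linarith
  · have hmass : ∑ i ∈ H, p₂ i ≤ 1 :=
      hp₂1 ▸ sum_le_univ_sum_of_nonneg fun i => hp₂0 i
    exact mul_le_of_le_one_right (by positivity) hmass

theorem heavy_points_l1_bound
    (n : ℕ) (ε w : ℝ) (hε : 0 < ε) (hε1 : ε < 1) (hw : 1 ≤ w)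
    (p₁ p₂ phat₁ phat₂ : Fin n → ℝ)
    (hp₁0 : ∀ i, 0 ≤ p₁ i) (hp₂0 : ∀ i, 0 ≤ p₂ i)
    (hp₁1 : ∑ i, p₁ i = 1) (hp₂1 : ∑ i, p₂ i = 1)
    (H : Finset (Fin n))
    (hpos : ∀ i ∈ H, 0 < p₁ i)
    (hratio : ∀ i ∈ H, p₂ i / p₁ i ≤ w)
    (hest₁ : ∀ i ∈ H, |phat₁ i - p₁ i| ≤ p₁ i * ε / 16)
    (hest₂ : ∀ i ∈ H, |phat₂ i - p₂ i| ≤ p₂ i * ε / 16) :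
    ∑ i ∈ H, |p₂ i - phat₂ i * (p₁ i / phat₁ i)| ≤ ε / 4 * ∑ i ∈ H, p₂ i
      ∧ ε / 4 * ∑ i ∈ H, p₂ i ≤ ε / 4 :=
  heavy_points_l1_bound_general n ε hε hε1 p₁ p₂ phat₁ phat₂ hp₂0 hp₂1 H hpos hest₁ hest₂
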